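/- arXiv:2111.04349 — 4 statements merged into one kernel-verified Lean document; each statement's English description precedes it below -/
import Mathlib

section
/- The function v̄(x) = v₊ / (1 + (v₊ - 1)·exp(-s·v₊·x/μ)) for x > 0 satisfies the travelling-wave ODE s·v̄'(x) + μ·(ln v̄)''(x) = 0 on (0, ∞). -/
/-!
Write `v̄ = a / (1 + c e^{k x})` with `a = v₊`, `c = v₊ - 1`, `k = -s v₊ / μ`. Such a logistic
profile solves `v' = -k v (1 - v / a)`, so `(log v)' = -k (1 - v / a)` and `(log v)'' = (k / a) v'`.
Hence `s v' + μ (log v)'' = (s + μ k / a) v'`, and `μ k / a = -s`.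
-/

open Real

noncomputable def logistic (a c k x : ℝ) : ℝ := a / (1 + c * exp (k * x))

section Logistic

variable {a c k : ℝ}

theorem hasDerivAt_logistic (hc : 0 ≤ c) (x : ℝ) :
    HasDerivAt (logistic a c k) (-k * logistic a c k x * (1 - logistic a c k x / a)) x := by
  have hD : HasDerivAt (fun y => 1 + c * exp (k * y)) (c * (exp (k * x) * k)) x :=
    (((hasDerivAt_id x).const_mul k).exp.const_mul c).const_add 1 |>.congr_deriv (by simp)
  have hDpos : 0 < 1 + c * exp (k * x) := by positivity
  refine ((hasDerivAt_const x a).div hD hDpos.ne').congr_deriv ?_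
  rcases eq_or_ne a 0 with rfl | ha
  · simp [logistic]
  · unfold logistic
    field_simp
    ring

theorem hasDerivAt_log_logistic (ha : a ≠ 0) (hc : 0 ≤ c) (x : ℝ) :
    HasDerivAt (fun y => log (logistic a c k y)) (-k * (1 - logistic a c k x / a)) x := by
  have hpos : logistic a c k x ≠ 0 := div_ne_zero ha (by positivity)
  convert (hasDerivAt_logistic hc x).log hpos using 1
  field_simp

theorem deriv_deriv_log_logistic (ha : a ≠ 0) (hc : 0 ≤ c) :
    deriv (deriv fun y => log (logistic a c k y)) = fun x => k / a * deriv (logistic a c k) x := by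
  have hfirst :
      deriv (fun y => log (logistic a c k y)) = fun x => -k * (1 - logistic a c k x / a) :=
    funext fun x => (hasDerivAt_log_logistic ha hc x).deriv
  funext x
  rw [hfirst, (hasDerivAt_logistic hc x).deriv]
  convert (((hasDerivAt_logistic hc x).div_const a).const_sub 1).const_mul (-k) |>.deriv using 1
  ring

end Logistic

theorem travelling_wave_ode_general (μ vp s : ℝ) (hμ : 0 < μ) (hvp : 1 < vp) :
    ∀ x > (0:ℝ),
      s * deriv (fun y => vp / (1 + (vp - 1) * Real.exp (-s * vp * y / μ))) x
        + μ * deriv (deriv (fun y =>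
            Real.log (vp / (1 + (vp - 1) * Real.exp (-s * vp * y / μ))))) x = 0 := by
  intro x _
  have hvp0 : vp ≠ 0 := by positivity
  have hprofile :
      ∀ y, vp / (1 + (vp - 1) * exp (-s * vp * y / μ)) = logistic vp (vp - 1) (-s * vp / μ) y := by
    intro y
    rw [logistic, mul_div_right_comm]
  simp only [hprofile]
  rw [deriv_deriv_log_logistic hvp0 (by linarith)]
  field_simp
  ring

/-- The travelling-wave profile satisfies s·v̄' + μ·(ln v̄)'' = 0 on (0,∞). -/
theorem travelling_wave_ode (μ vp s : ℝ) (hμ : 0 < μ) (hvp : 1 < vp) (hs : 0 < s) :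
    ∀ x > (0:ℝ),
      s * deriv (fun y => vp / (1 + (vp - 1) * Real.exp (-s * vp * y / μ))) x
        + μ * deriv (deriv (fun y =>
            Real.log (vp / (1 + (vp - 1) * Real.exp (-s * vp * y / μ))))) x = 0 :=
  travelling_wave_ode_general μ vp s hμ hvp
end

section
/- Coercivity of 𝒜∂ₓ: for every φ ∈ H²(ℝ₊) (say φ ∈ C²_c([0,∞)) or φ smooth with sufficient decay), ∫₀^∞ (𝒜∂ₓφ)·φ dx = μ·∫₀^∞ (φ'(x))²/v̄(x) dx + (s/2)·φ(0)² + μ·φ'(0)·φ(0), where 𝒜ψ := -s·ψ - μ·(ψ/v̄)'. In particular ∫₀^∞ (𝒜∂ₓφ)·φ dx ≥ (μ/v₊)·∫₀^∞ (φ')² + (s/2)·φ(0)² + μ·φ'(0)·φ(0). -/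
/-!
Two integrations by parts on `(0, ∞)`, whose boundary terms at infinity vanish by compact support:
`∫ φ' φ = -φ(0)² / 2` and `∫ (φ'/v̄)' φ = -φ'(0) φ(0) / v̄(0) - ∫ φ'² / v̄`,
with `v̄(0) = 1`.
The lower bound then only uses `0 < v̄ ≤ v₊`.
-/

open MeasureTheory Set Filter Real

theorem HasCompactSupport.tendsto_atTop_zero {f : ℝ → ℝ} (hf : HasCompactSupport f) :
    Tendsto f atTop (nhds 0) :=
  hf.is_zero_at_infty.mono_left atTop_le_cocompact

theorem integral_Ioi_deriv_mul_eq_neg_sub {u v : ℝ → ℝ} (hu : ContDiff ℝ 1 u)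
    (hv : ContDiff ℝ 1 v) (hv_supp : HasCompactSupport v) (a : ℝ) :
    ∫ x in Ioi a, deriv u x * v x = -(u a * v a) - ∫ x in Ioi a, u x * deriv v x := by
  have hu' := hu.continuous_deriv le_rfl
  have hv' := hv.continuous_deriv le_rfl
  have h := integral_Ioi_mul_deriv_eq_deriv_mul (a := a) (a' := v a * u a) (b' := 0)
    (fun x _ => (hv.differentiable one_ne_zero x).hasDerivAt)
    (fun x _ => (hu.differentiable one_ne_zero x).hasDerivAt)
    ((hv.continuous.mul hu').integrable_of_hasCompactSupport hv_supp.mul_right).integrableOn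
    ((hv'.mul hu.continuous).integrable_of_hasCompactSupport
      hv_supp.deriv.mul_right).integrableOn
    (((hv.continuous.mul hu.continuous).tendsto a).mono_left nhdsWithin_le_nhds)
    hv_supp.mul_right.tendsto_atTop_zero
  simp only [mul_comm (v _), mul_comm (deriv v _)] at h
  linarith

theorem integral_Ioi_deriv_mul_self {φ : ℝ → ℝ} (hφ : ContDiff ℝ 1 φ)
    (hsupp : HasCompactSupport φ) (a : ℝ) :
    ∫ x in Ioi a, deriv φ x * φ x = -(φ a ^ 2 / 2) := by
  have h := integral_Ioi_deriv_mul_eq_neg_sub hφ hφ hsupp a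
  simp only [mul_comm (φ _) (deriv φ _)] at h
  linarith

/-- The operator `𝒜`, with a general weight `w` in place of `v̄`. -/
noncomputable def linearizedOp (s μ : ℝ) (w ψ : ℝ → ℝ) (x : ℝ) : ℝ :=
  -s * ψ x - μ * deriv (fun y => ψ y / w y) x

theorem integral_Ioi_linearizedOp_deriv_mul_self (s μ : ℝ) {w φ : ℝ → ℝ}
    (hw : ContDiff ℝ 1 w) (hw_ne : ∀ x, w x ≠ 0) (hφ : ContDiff ℝ 2 φ)
    (hsupp : HasCompactSupport φ) (a : ℝ) :
    ∫ x in Ioi a, linearizedOp s μ w (deriv φ) x * φ x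
      = μ * (∫ x in Ioi a, deriv φ x ^ 2 / w x)
          + s / 2 * φ a ^ 2 + μ * (deriv φ a / w a) * φ a := by
  have hφ1 : ContDiff ℝ 1 φ := hφ.of_le (by norm_num)
  have hφ' : ContDiff ℝ 1 (deriv φ) := hφ.iterate_deriv' 1 1
  have hg : ContDiff ℝ 1 fun y => deriv φ y / w y := hφ'.div hw hw_ne
  have hint : ∀ {f : ℝ → ℝ}, Continuous f → IntegrableOn (fun x => f x * φ x) (Ioi a) :=
    fun hf => ((hf.mul hφ.continuous).integrable_of_hasCompactSupport hsupp.mul_left).integrableOn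
  have hparts := integral_Ioi_deriv_mul_eq_neg_sub hg hφ1 hsupp a
  simp only [div_mul_eq_mul_div, ← sq] at hparts
  simp only [linearizedOp, sub_mul, mul_assoc]
  rw [integral_sub ((hint hφ'.continuous).const_mul _)
      ((hint (hg.continuous_deriv le_rfl)).const_mul _), integral_const_mul, integral_const_mul,
    integral_Ioi_deriv_mul_self hφ1 hsupp, hparts]
  ring

theorem setIntegral_div_const_le_setIntegral_div {X : Type*} [TopologicalSpace X]
    [MeasurableSpace X] [OpensMeasurableSpace X] {ν : Measure X} [IsFiniteMeasureOnCompacts ν]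
    {f w : X → ℝ} {S : Set X} {c : ℝ} (hS : MeasurableSet S) (hf : Continuous f)
    (hf_supp : HasCompactSupport f) (hw : Continuous w) (hf_nonneg : ∀ x, 0 ≤ f x)
    (hw_pos : ∀ x, 0 < w x) (hw_le : ∀ x ∈ S, w x ≤ c) :
    (∫ x in S, f x ∂ν) / c ≤ ∫ x in S, f x / w x ∂ν := by
  have hfw : Continuous fun x => f x / w x := hf.div hw fun x => (hw_pos x).ne'
  rw [← integral_div]
  refine setIntegral_mono_on
    ((hf.integrable_of_hasCompactSupport hf_supp).integrableOn.div_const c)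
    (hfw.integrable_of_hasCompactSupport (hf_supp.mono fun x hx h => hx (by simp [h]))).integrableOn
    hS fun x hx => div_le_div_of_nonneg_left (hf_nonneg x) (hw_pos x) (hw_le x hx)

noncomputable def logisticProfile (vp r x : ℝ) : ℝ :=
  vp / (1 + (vp - 1) * exp (-(r * x)))

section logisticProfile

variable {vp : ℝ} (r : ℝ)

theorem one_le_logisticProfile_denom (hvp : 1 ≤ vp) (x : ℝ) :
    1 ≤ 1 + (vp - 1) * exp (-(r * x)) :=
  le_add_of_nonneg_right (mul_nonneg (by linarith) (exp_pos _).le)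

theorem logisticProfile_zero (hvp : vp ≠ 0) : logisticProfile vp r 0 = 1 := by
  simp [logisticProfile, hvp]

theorem logisticProfile_pos (hvp : 1 ≤ vp) (x : ℝ) : 0 < logisticProfile vp r x :=
  div_pos (by linarith) (by linarith [one_le_logisticProfile_denom r hvp x])

theorem logisticProfile_le (hvp : 1 ≤ vp) (x : ℝ) : logisticProfile vp r x ≤ vp :=
  div_le_self (by linarith) (one_le_logisticProfile_denom r hvp x)

theorem contDiff_logisticProfile (hvp : 1 ≤ vp) {n : WithTop ℕ∞} :
    ContDiff ℝ n (logisticProfile vp r) :=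
  contDiff_const.div
    (contDiff_const.add (contDiff_const.mul (contDiff_const.mul contDiff_id).neg.exp))
    fun x => by linarith [one_le_logisticProfile_denom r hvp x]

end logisticProfile

theorem coercivity_A_dx_general (μ vp s : ℝ) (hμ : 0 < μ) (hvp : 1 < vp)
    (vb : ℝ → ℝ) (hvb : ∀ x, vb x = vp / (1 + (vp - 1) * Real.exp (-s * vp * x / μ)))
    (φ : ℝ → ℝ) (hφ : ContDiff ℝ 2 φ) (hsupp : HasCompactSupport φ) :
    (∫ x in Set.Ioi (0:ℝ),
        (-s * deriv φ x - μ * deriv (fun y => deriv φ y / vb y) x) * φ x)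
      = μ * (∫ x in Set.Ioi (0:ℝ), (deriv φ x) ^ 2 / vb x)
          + (s / 2) * (φ 0) ^ 2 + μ * deriv φ 0 * φ 0
    ∧ (∫ x in Set.Ioi (0:ℝ),
        (-s * deriv φ x - μ * deriv (fun y => deriv φ y / vb y) x) * φ x)
      ≥ (μ / vp) * (∫ x in Set.Ioi (0:ℝ), (deriv φ x) ^ 2)
          + (s / 2) * (φ 0) ^ 2 + μ * deriv φ 0 * φ 0 := by
  obtain rfl : vb = logisticProfile vp (s * vp / μ) :=
    funext fun x => by rw [hvb, logisticProfile]; ring_nf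
  have hvb_pos := logisticProfile_pos (s * vp / μ) hvp.le
  have hidentity := integral_Ioi_linearizedOp_deriv_mul_self s μ
    (contDiff_logisticProfile _ hvp.le) (fun x => (hvb_pos x).ne') hφ hsupp 0
  simp only [linearizedOp, logisticProfile_zero _ (by linarith : vp ≠ 0), div_one] at hidentity
  refine ⟨hidentity, ?_⟩
  have hφ' : Continuous (deriv φ) := hφ.continuous_deriv (by norm_num)
  have hbound : (∫ x in Ioi (0:ℝ), deriv φ x ^ 2) / vp
      ≤ ∫ x in Ioi (0:ℝ), deriv φ x ^ 2 / logisticProfile vp (s * vp / μ) x :=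
    setIntegral_div_const_le_setIntegral_div measurableSet_Ioi (hφ'.pow 2)
      (hsupp.deriv.mono fun x hx h => hx (by simp [h]))
      (contDiff_logisticProfile (n := 0) _ hvp.le).continuous (fun x => sq_nonneg (deriv φ x))
      hvb_pos fun x _ => logisticProfile_le _ hvp.le x
  rw [hidentity, ge_iff_le]
  gcongr ?_ + _ + _
  rw [div_mul_eq_mul_div, mul_div_assoc]
  exact mul_le_mul_of_nonneg_left hbound hμ.le

/-- Coercivity of 𝒜∂ₓ: exact identity, and lower bound, for the quadratic form. -/
theorem coercivity_A_dx (μ vp s : ℝ) (hμ : 0 < μ) (hvp : 1 < vp) (hs : 0 < s)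
    (vb : ℝ → ℝ) (hvb : ∀ x, vb x = vp / (1 + (vp - 1) * Real.exp (-s * vp * x / μ)))
    (φ : ℝ → ℝ) (hφ : ContDiff ℝ 2 φ) (hsupp : HasCompactSupport φ) :
    (∫ x in Set.Ioi (0:ℝ),
        (-s * deriv φ x - μ * deriv (fun y => deriv φ y / vb y) x) * φ x)
      = μ * (∫ x in Set.Ioi (0:ℝ), (deriv φ x) ^ 2 / vb x)
          + (s / 2) * (φ 0) ^ 2 + μ * deriv φ 0 * φ 0
    ∧ (∫ x in Set.Ioi (0:ℝ),
        (-s * deriv φ x - μ * deriv (fun y => deriv φ y / vb y) x) * φ x)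
      ≥ (μ / vp) * (∫ x in Set.Ioi (0:ℝ), (deriv φ x) ^ 2)
          + (s / 2) * (φ 0) ^ 2 + μ * deriv φ 0 * φ 0 :=
  coercivity_A_dx_general μ vp s hμ hvp vb hvb φ hφ hsupp
end

section
/- Weighted change-of-variables estimate: if F ∈ L²(ℝ₊) with √x·F ∈ L²(ℝ₊), M ≥ 1, and ỹ ∈ L^∞([0,T]) satisfies ỹ(t) ≥ t/M for a.e. t, then for all T > 0 and R > 0, ∫₀^T ∫₀^R F(x + ỹ(t))² dx dt ≤ M·∫₀^∞ z·F(z)² dz. -/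
/-!
Since `ỹ(t) ≥ t/M`, translating `x ↦ x + ỹ(t)` bounds the inner integral by the tail
`∫_{t/M}^∞ F²`. Integrating these tails over `t > 0` and exchanging the order of integration
(Tonelli), each `z` is counted for `t ∈ (0, M z)`, which produces the weight `M z`.
-/

open MeasureTheory Set

theorem setLIntegral_Ioi_zero_comp_add_right (G : ℝ → ENNReal) (a : ℝ) :
    ∫⁻ x in Ioi 0, G (x + a) = ∫⁻ z in Ioi a, G z := by
  have h := (measurePreserving_add_right volume a).setLIntegral_comp_preimage_emb
    (measurableEmbedding_addRight a) G (Ioi a)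
  rwa [preimage_add_const_Ioi, sub_self] at h

/-- Tonelli on `S = {(t, z) | t < M z}`: its `t`-sections are the tails `Ioi (t / M)` and its
`z`-sections (for `t > 0`) the intervals `Ioo 0 (M z)`. -/
theorem setLIntegral_Ioi_setLIntegral_Ioi_div {G : ℝ → ENNReal} (hG : Measurable G) {M : ℝ}
    (hM : 0 < M) :
    ∫⁻ t in Ioi 0, ∫⁻ z in Ioi (t / M), G z
      = ENNReal.ofReal M * ∫⁻ z in Ioi 0, ENNReal.ofReal z * G z := by
  set S := {p : ℝ × ℝ | p.1 < M * p.2}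
  have section_t (t z : ℝ) :
      S.indicator (fun p => G p.2) (t, z) = (Ioi (t / M)).indicator G z := by
    simp [S, indicator_apply, div_lt_iff₀ hM, mul_comm]
  have section_z (t z : ℝ) :
      S.indicator (fun p => G p.2) (t, z) = (Iio (M * z)).indicator (fun _ => G z) t := by
    simp [S, indicator_apply]
  have integral_section_t : ∀ t ∈ Ioi (0:ℝ), ∫⁻ z in Ioi (t / M), G z
      = ∫⁻ z in Ioi 0, S.indicator (fun p => G p.2) (t, z) := by
    intro t ht
    simp only [section_t, setLIntegral_indicator measurableSet_Ioi,
      inter_eq_left.2 (Ioi_subset_Ioi (div_pos ht hM).le)]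
  have integral_section_z : ∀ z ∈ Ioi (0:ℝ), ∫⁻ t in Ioi 0, S.indicator (fun p => G p.2) (t, z)
      = ENNReal.ofReal M * (ENNReal.ofReal z * G z) := by
    intro z hz
    simp only [section_z, setLIntegral_indicator measurableSet_Iio, Iio_inter_Ioi,
      setLIntegral_const, Real.volume_Ioo, sub_zero, ENNReal.ofReal_mul hM.le]
    ring
  have hS : Measurable (S.indicator (fun p => G p.2)) :=
    (hG.comp measurable_snd).indicator
      (measurableSet_lt measurable_fst (measurable_snd.const_mul M))
  rw [setLIntegral_congr_fun measurableSet_Ioi integral_section_t,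
    lintegral_lintegral_swap (f := fun t z => S.indicator (fun p => G p.2) (t, z))
      hS.aemeasurable,
    setLIntegral_congr_fun measurableSet_Ioi integral_section_z,
    lintegral_const_mul' _ _ ENNReal.ofReal_ne_top]

theorem weighted_change_of_variables_general (F : ℝ → ℝ) (hF : Measurable F)
    (M : ℝ) (hM : 1 ≤ M) (T R : ℝ)
    (y : ℝ → ℝ)
    (hy : ∀ᵐ t ∂(volume.restrict (Set.Ioc (0:ℝ) T)), t / M ≤ y t) :
    ∫⁻ t in Set.Ioc (0:ℝ) T, ∫⁻ x in Set.Ioc (0:ℝ) R,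
        ENNReal.ofReal ((F (x + y t)) ^ 2)
      ≤ ENNReal.ofReal M
          * ∫⁻ z in Set.Ioi (0:ℝ), ENNReal.ofReal (z * (F z) ^ 2) := by
  set G : ℝ → ENNReal := fun z => ENNReal.ofReal (F z ^ 2)
  have inner_le_tail : ∀ᵐ t ∂(volume.restrict (Ioc 0 T)),
      ∫⁻ x in Ioc 0 R, G (x + y t) ≤ ∫⁻ z in Ioi (t / M), G z := by
    filter_upwards [hy] with t ht
    calc ∫⁻ x in Ioc 0 R, G (x + y t)
        ≤ ∫⁻ x in Ioi 0, G (x + y t) := lintegral_mono_set Ioc_subset_Ioi_self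
      _ = ∫⁻ z in Ioi (y t), G z := setLIntegral_Ioi_zero_comp_add_right G (y t)
      _ ≤ ∫⁻ z in Ioi (t / M), G z := lintegral_mono_set (Ioi_subset_Ioi ht)
  calc _ ≤ ∫⁻ t in Ioc 0 T, ∫⁻ z in Ioi (t / M), G z := lintegral_mono_ae inner_le_tail
    _ ≤ ∫⁻ t in Ioi 0, ∫⁻ z in Ioi (t / M), G z := lintegral_mono_set Ioc_subset_Ioi_self
    _ = ENNReal.ofReal M * ∫⁻ z in Ioi 0, ENNReal.ofReal z * G z :=
      setLIntegral_Ioi_setLIntegral_Ioi_div (hF.pow_const 2).ennreal_ofReal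
        (zero_lt_one.trans_le hM)
    _ = _ := by
      congr 1
      exact setLIntegral_congr_fun measurableSet_Ioi fun z hz => (ENNReal.ofReal_mul hz.le).symm

/-- Weighted change-of-variables estimate. -/
theorem weighted_change_of_variables (F : ℝ → ℝ) (hF : Measurable F)
    (M : ℝ) (hM : 1 ≤ M) (T R : ℝ) (hT : 0 < T) (hR : 0 < R)
    (y : ℝ → ℝ) (hy_meas : Measurable y)
    (hy : ∀ᵐ t ∂(volume.restrict (Set.Ioc (0:ℝ) T)), t / M ≤ y t) :
    ∫⁻ t in Set.Ioc (0:ℝ) T, ∫⁻ x in Set.Ioc (0:ℝ) R,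
        ENNReal.ofReal ((F (x + y t)) ^ 2)
      ≤ ENNReal.ofReal M
          * ∫⁻ z in Set.Ioi (0:ℝ), ENNReal.ofReal (z * (F z) ^ 2) :=
  weighted_change_of_variables_general F hF M hM T R y hy
end

section
/- Taylor-type L² comparison estimate: let ỹ₁, ỹ₂ be locally bounded on [0,T] with derivatives in L² ∩ L^∞(0,T), ỹ₁(0) = ỹ₂(0) = 0, and M⁻¹ ≤ ỹᵢ'(t) ≤ M a.e. for some M ≥ 1. If w⁰ ∈ W^{1,∞}(ℝ₊) with √x·∂ₓw⁰ ∈ L²(ℝ₊), then ‖w⁰(ỹ₁(·)) - w⁰(ỹ₂(·))‖_{L²(0,T)} ≤ C·‖ỹ₁' - ỹ₂'‖_{L²(0,T)}·‖√z·∂ₓw⁰(z)‖_{L²(ℝ₊)}, where C depends only on M. -/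
/-!
Write `y_θ = y₂ + θ (y₁ - y₂)`. The fundamental theorem of calculus in `θ` and Cauchy–Schwarz give
`(w (y₁ t) - w (y₂ t))² ≤ ∫₀¹ w'(y_θ t)² (y₁ t - y₂ t)² dθ`, and in `t` they give
`(y₁ t - y₂ t)² ≤ t ‖y₁' - y₂'‖²`. Every `y_θ` vanishes at `0` with derivative in `[M⁻¹, M]`, so
`t ≤ M y_θ t` and `1 ≤ M y_θ' t`: the integrand is at most `M² ‖y₁' - y₂'‖²` times
`y_θ' t · y_θ t · w'(y_θ t)²`. After exchanging the integrals, the substitution `z = y_θ t` bounds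
the `t`-integral of the latter by `∫_{z > 0} z w'(z)² dz`, which gives the estimate with `C = M`.
-/

open MeasureTheory Set

lemma sq_setIntegral_le_measureReal_mul_setIntegral_sq {α : Type*} [MeasurableSpace α]
    {μ : Measure α} {s : Set α} {f : α → ℝ} (hs : μ s ≠ ⊤)
    (hf : IntegrableOn f s μ) (hf2 : IntegrableOn (fun x => f x ^ 2) s μ) :
    (∫ x in s, f x ∂μ) ^ 2 ≤ μ.real s * ∫ x in s, f x ^ 2 ∂μ := by
  rcases eq_or_ne (μ s) 0 with h0 | h0
  · simp [Measure.restrict_eq_zero.2 h0]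
  have hpos : 0 < μ.real s := ENNReal.toReal_pos h0 hs
  have jensen := even_two.convexOn_pow.map_set_average_le (continuous_pow 2).continuousOn
    isClosed_univ h0 hs (ae_of_all _ fun _ => mem_univ _) hf hf2
  rw [setAverage_eq, setAverage_eq, smul_eq_mul, smul_eq_mul, mul_pow] at jensen
  have := mul_le_mul_of_nonneg_left jensen (sq_nonneg (μ.real s))
  field_simp at this
  linarith

lemma integrableOn_Ioc_of_abs_le {g : ℝ → ℝ} {a b C : ℝ} (hg : Measurable g)
    (hC : ∀ x ∈ Ioc a b, |g x| ≤ C) : IntegrableOn g (Ioc a b) :=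
  Measure.integrableOn_of_bounded measure_Ioc_lt_top.ne hg.aestronglyMeasurable
    ((ae_restrict_mem measurableSet_Ioc).mono hC)

lemma sq_sub_le_mul_setIntegral_sq_deriv {f f' : ℝ → ℝ} {a b : ℝ} (hab : a ≤ b)
    (hf : ∀ x ∈ Icc a b, HasDerivAt f (f' x) x) (hf' : IntegrableOn f' (Ioc a b))
    (hf'2 : IntegrableOn (fun x => f' x ^ 2) (Ioc a b)) :
    (f b - f a) ^ 2 ≤ (b - a) * ∫ x in Ioc a b, f' x ^ 2 := by
  have ftc : ∫ x in Ioc a b, f' x = f b - f a := by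
    rw [← intervalIntegral.integral_of_le hab]
    exact intervalIntegral.integral_eq_sub_of_hasDerivAt (by rwa [uIcc_of_le hab])
      ((intervalIntegrable_iff_integrableOn_Ioc_of_le hab).2 hf')
  rw [← ftc, ← Real.volume_real_Ioc_of_le hab]
  exact sq_setIntegral_le_measureReal_mul_setIntegral_sq measure_Ioc_lt_top.ne hf' hf'2

lemma sq_sub_le_setIntegral_sq_deriv_comp {w : ℝ → ℝ} {K : ℝ} (hw : Differentiable ℝ w)
    (hK : ∀ z, |deriv w z| ≤ K) (u v : ℝ) :
    (w v - w u) ^ 2 ≤ ∫ θ in Ioc (0:ℝ) 1, (deriv w (u + θ * (v - u)) * (v - u)) ^ 2 := by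
  have hderiv : ∀ θ : ℝ, HasDerivAt (fun θ => w (u + θ * (v - u)))
      (deriv w (u + θ * (v - u)) * (v - u)) θ := fun θ =>
    (hw _).hasDerivAt.comp θ (((hasDerivAt_id θ).mul_const (v - u)).const_add u |>.congr_deriv
      (one_mul _))
  have hmeas : Measurable fun θ : ℝ => deriv w (u + θ * (v - u)) * (v - u) := by fun_prop
  have hbound : ∀ θ, |deriv w (u + θ * (v - u)) * (v - u)| ≤ K * |v - u| := fun θ => by
    rw [abs_mul]; exact mul_le_mul_of_nonneg_right (hK _) (abs_nonneg _)
  have key := sq_sub_le_mul_setIntegral_sq_deriv zero_le_one (fun θ _ => hderiv θ)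
    (integrableOn_Ioc_of_abs_le hmeas fun θ _ => hbound θ)
    (integrableOn_Ioc_of_abs_le (hmeas.pow_const 2) fun θ _ => by
      rw [abs_pow]; exact pow_le_pow_left₀ (abs_nonneg _) (hbound θ) 2)
  simpa using key

lemma mul_le_and_le_mul_of_hasDerivAt {y y' : ℝ → ℝ} {a b T : ℝ}
    (hy : ∀ t, HasDerivAt y (y' t) t) (h0 : y 0 = 0) (hy' : ∀ t ∈ Icc 0 T, y' t ∈ Icc a b)
    {t : ℝ} (ht : t ∈ Icc 0 T) : a * t ≤ y t ∧ y t ≤ b * t := by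
  have hcont : ContinuousOn y (Icc 0 T) := fun x _ => (hy x).continuousAt.continuousWithinAt
  have hdiff : DifferentiableOn ℝ y (interior (Icc 0 T)) := fun x _ =>
    (hy x).differentiableAt.differentiableWithinAt
  have hderiv : ∀ x ∈ interior (Icc 0 T), deriv y x ∈ Icc a b := fun x hx => by
    rw [(hy x).deriv]; exact hy' x (interior_subset hx)
  have h0T : (0:ℝ) ∈ Icc 0 T := left_mem_Icc.2 (ht.1.trans ht.2)
  constructor
  · simpa [h0] using (convex_Icc 0 T).mul_sub_le_image_sub_of_le_deriv hcont hdiff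
      (fun x hx => (hderiv x hx).1) 0 h0T t ht ht.1
  · simpa [h0] using (convex_Icc 0 T).image_sub_le_mul_sub_of_deriv_le hcont hdiff
      (fun x hx => (hderiv x hx).2) 0 h0T t ht ht.1

lemma setIntegral_deriv_mul_comp_le_setIntegral_Ioi {y y' g : ℝ → ℝ} {T : ℝ}
    (hy : ∀ t, HasDerivAt y (y' t) t) (h0 : y 0 = 0) (hy' : ∀ t ∈ Icc 0 T, 0 < y' t)
    (hg : IntegrableOn g (Ioi 0)) (hg0 : ∀ z ∈ Ioi 0, 0 ≤ g z) :
    ∫ t in Ioc 0 T, y' t * g (y t) ≤ ∫ z in Ioi 0, g z := by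
  have hmono : StrictMonoOn y (Icc 0 T) :=
    strictMonoOn_of_hasDerivWithinAt_pos (convex_Icc 0 T)
      (fun x _ => (hy x).continuousAt.continuousWithinAt) (fun x _ => (hy x).hasDerivWithinAt)
      fun x hx => hy' x (interior_subset hx)
  have himage : y '' Ioc 0 T ⊆ Ioi 0 := by
    rintro _ ⟨t, ht, rfl⟩
    simpa [h0] using hmono (left_mem_Icc.2 (ht.1.le.trans ht.2)) (Ioc_subset_Icc_self ht) ht.1
  have hchange := integral_image_eq_integral_abs_deriv_smul measurableSet_Ioc
    (fun t _ => (hy t).hasDerivWithinAt) (hmono.injOn.mono Ioc_subset_Icc_self) g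
  calc ∫ t in Ioc 0 T, y' t * g (y t)
      = ∫ z in y '' Ioc 0 T, g z := by
        rw [hchange]
        refine setIntegral_congr_fun measurableSet_Ioc fun t ht => ?_
        rw [smul_eq_mul, abs_of_pos (hy' t (Ioc_subset_Icc_self ht))]
    _ ≤ ∫ z in Ioi 0, g z :=
        setIntegral_mono_set hg ((ae_restrict_mem measurableSet_Ioi).mono hg0)
          himage.eventuallyLE

lemma sq_le_mul_setIntegral_sq_deriv {f f' : ℝ → ℝ} {T C t : ℝ}
    (hf : ∀ t, HasDerivAt f (f' t) t) (hf' : Measurable f') (h0 : f 0 = 0)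
    (hC : ∀ s ∈ Ioc 0 T, |f' s| ≤ C) (ht : t ∈ Icc 0 T) :
    f t ^ 2 ≤ t * ∫ s in Ioc 0 T, f' s ^ 2 := by
  have hsq : ∀ s ∈ Ioc 0 T, |f' s ^ 2| ≤ C ^ 2 := fun s hs => by
    rw [abs_pow]; exact pow_le_pow_left₀ (abs_nonneg _) (hC s hs) 2
  have hsub : Ioc 0 t ⊆ Ioc 0 T := Ioc_subset_Ioc_right ht.2
  calc f t ^ 2 ≤ (t - 0) * ∫ s in Ioc 0 t, f' s ^ 2 := by
        simpa [h0] using sq_sub_le_mul_setIntegral_sq_deriv ht.1 (fun s _ => hf s)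
          (integrableOn_Ioc_of_abs_le hf' fun s hs => hC s (hsub hs))
          (integrableOn_Ioc_of_abs_le (hf'.pow_const 2) fun s hs => hsq s (hsub hs))
    _ ≤ t * ∫ s in Ioc 0 T, f' s ^ 2 := by
        rw [sub_zero]
        exact mul_le_mul_of_nonneg_left (setIntegral_mono_set
          (integrableOn_Ioc_of_abs_le (hf'.pow_const 2) hsq)
          (ae_of_all _ fun s => sq_nonneg _) hsub.eventuallyLE) ht.1

def interpolate (y₁ y₂ : ℝ → ℝ) (θ t : ℝ) : ℝ := y₂ t + θ * (y₁ t - y₂ t)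

lemma hasDerivAt_interpolate {y₁ y₂ y₁' y₂' : ℝ → ℝ} (h₁ : ∀ t, HasDerivAt y₁ (y₁' t) t)
    (h₂ : ∀ t, HasDerivAt y₂ (y₂' t) t) (θ t : ℝ) :
    HasDerivAt (interpolate y₁ y₂ θ) (interpolate y₁' y₂' θ t) t :=
  (h₂ t).add (((h₁ t).sub (h₂ t)).const_mul θ)

lemma Convex.interpolate_mem {y₁ y₂ : ℝ → ℝ} {s : Set ℝ} {θ t : ℝ} (hs : Convex ℝ s)
    (h₁ : y₁ t ∈ s) (h₂ : y₂ t ∈ s) (hθ : θ ∈ Icc 0 1) : interpolate y₁ y₂ θ t ∈ s :=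
  hs.add_smul_sub_mem h₂ h₁ hθ

noncomputable def pulledBackDensity (w y₁ y₂ : ℝ → ℝ) (t θ : ℝ) : ℝ :=
  interpolate (deriv y₁) (deriv y₂) θ t *
    (interpolate y₁ y₂ θ t * deriv w (interpolate y₁ y₂ θ t) ^ 2)

structure PinchedPath (M T : ℝ) (y : ℝ → ℝ) : Prop where
  differentiable : Differentiable ℝ y
  map_zero : y 0 = 0
  deriv_mem : ∀ t ∈ Icc 0 T, deriv y t ∈ Icc M⁻¹ M

section

variable {M T K : ℝ} {y₁ y₂ w : ℝ → ℝ}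

lemma PinchedPath.abs_deriv_sub_le (hM : 0 < M) (h₁ : PinchedPath M T y₁)
    (h₂ : PinchedPath M T y₂) {t : ℝ} (ht : t ∈ Icc 0 T) : |deriv y₁ t - deriv y₂ t| ≤ M := by
  obtain ⟨h₁l, h₁u⟩ := h₁.deriv_mem t ht
  obtain ⟨h₂l, h₂u⟩ := h₂.deriv_mem t ht
  have := inv_pos.2 hM
  exact abs_sub_le_iff.2 ⟨by linarith, by linarith⟩

lemma PinchedPath.sq_sub_le (hM : 0 < M) (h₁ : PinchedPath M T y₁) (h₂ : PinchedPath M T y₂)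
    {t : ℝ} (ht : t ∈ Icc 0 T) :
    (y₁ t - y₂ t) ^ 2 ≤ t * ∫ s in Ioc 0 T, (deriv y₁ s - deriv y₂ s) ^ 2 :=
  sq_le_mul_setIntegral_sq_deriv (f := fun s => y₁ s - y₂ s)
    (fun s => (h₁.differentiable s).hasDerivAt.sub (h₂.differentiable s).hasDerivAt)
    ((measurable_deriv y₁).sub (measurable_deriv y₂)) (by simp [h₁.map_zero, h₂.map_zero])
    (fun s hs => h₁.abs_deriv_sub_le hM h₂ (Ioc_subset_Icc_self hs)) ht

lemma PinchedPath.hasDerivAt_interpolate (h₁ : PinchedPath M T y₁) (h₂ : PinchedPath M T y₂)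
    (θ t : ℝ) : HasDerivAt (interpolate y₁ y₂ θ) (interpolate (deriv y₁) (deriv y₂) θ t) t :=
  _root_.hasDerivAt_interpolate (fun s => (h₁.differentiable s).hasDerivAt)
    (fun s => (h₂.differentiable s).hasDerivAt) θ t

lemma PinchedPath.interpolate_mem (h₁ : PinchedPath M T y₁) (h₂ : PinchedPath M T y₂)
    {t θ : ℝ} (ht : t ∈ Icc 0 T) (hθ : θ ∈ Icc 0 1) :
    interpolate (deriv y₁) (deriv y₂) θ t ∈ Icc M⁻¹ M ∧
      interpolate y₁ y₂ θ t ∈ Icc (M⁻¹ * t) (M * t) := by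
  have hmem : ∀ s ∈ Icc 0 T, interpolate (deriv y₁) (deriv y₂) θ s ∈ Icc M⁻¹ M := fun s hs =>
    (convex_Icc _ _).interpolate_mem (h₁.deriv_mem s hs) (h₂.deriv_mem s hs) hθ
  exact ⟨hmem t ht, mul_le_and_le_mul_of_hasDerivAt (h₁.hasDerivAt_interpolate h₂ θ)
    (by simp [interpolate, h₁.map_zero, h₂.map_zero]) hmem ht⟩

lemma PinchedPath.pulledBackDensity_mem_Icc (hM : 0 < M) (h₁ : PinchedPath M T y₁)
    (h₂ : PinchedPath M T y₂) (hK : ∀ z, |deriv w z| ≤ K) {t θ : ℝ} (ht : t ∈ Icc 0 T)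
    (hθ : θ ∈ Icc 0 1) :
    pulledBackDensity w y₁ y₂ t θ ∈ Icc 0 (M * (M * T * K ^ 2)) := by
  obtain ⟨⟨hv₀, hv₁⟩, ⟨hp₀, hp₁⟩⟩ := h₁.interpolate_mem h₂ ht hθ
  have hT : 0 ≤ T := ht.1.trans ht.2
  have hv₀' : 0 ≤ interpolate (deriv y₁) (deriv y₂) θ t := le_trans (by positivity) hv₀
  have hp₀' : 0 ≤ interpolate y₁ y₂ θ t := le_trans (by have := ht.1; positivity) hp₀
  have hpT : interpolate y₁ y₂ θ t ≤ M * T := hp₁.trans (by have := ht.2; gcongr)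
  have hw : deriv w (interpolate y₁ y₂ θ t) ^ 2 ≤ K ^ 2 :=
    sq_le_sq' (abs_le.1 (hK _)).1 (abs_le.1 (hK _)).2
  unfold pulledBackDensity
  exact ⟨by positivity, mul_le_mul hv₁ (mul_le_mul hpT hw (sq_nonneg _) (by positivity))
    (by positivity) hM.le⟩

lemma PinchedPath.integrable_pulledBackDensity (hM : 0 < M) (h₁ : PinchedPath M T y₁)
    (h₂ : PinchedPath M T y₂) (hK : ∀ z, |deriv w z| ≤ K) :
    Integrable (Function.uncurry (pulledBackDensity w y₁ y₂))
      ((volume.restrict (Ioc 0 T)).prod (volume.restrict (Ioc 0 1))) := by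
  have hmeas : Measurable (Function.uncurry (pulledBackDensity w y₁ y₂)) := by
    have := h₁.differentiable.continuous.measurable
    have := h₂.differentiable.continuous.measurable
    have := measurable_deriv y₁
    have := measurable_deriv y₂
    have := measurable_deriv w
    unfold pulledBackDensity interpolate
    fun_prop
  rw [Measure.prod_restrict, ← Measure.volume_eq_prod]
  refine Measure.integrableOn_of_bounded (M := M * (M * T * K ^ 2)) ?_
    hmeas.aestronglyMeasurable ?_
  · rw [Measure.volume_eq_prod, Measure.prod_prod]
    exact ENNReal.mul_ne_top measure_Ioc_lt_top.ne measure_Ioc_lt_top.ne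
  · filter_upwards [ae_restrict_mem (measurableSet_Ioc.prod measurableSet_Ioc)]
      with ⟨t, θ⟩ ⟨ht, hθ⟩
    obtain ⟨h₀, hle⟩ := h₁.pulledBackDensity_mem_Icc hM h₂ hK (Ioc_subset_Icc_self ht)
      (Ioc_subset_Icc_self hθ)
    rwa [Function.uncurry_apply_pair, Real.norm_eq_abs, abs_of_nonneg h₀]

lemma PinchedPath.sq_comp_sub_le (hM : 0 < M) (h₁ : PinchedPath M T y₁)
    (h₂ : PinchedPath M T y₂) (hw : Differentiable ℝ w) (hK : ∀ z, |deriv w z| ≤ K) {t : ℝ}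
    (ht : t ∈ Icc 0 T) (hG : IntegrableOn (pulledBackDensity w y₁ y₂ t) (Ioc 0 1)) :
    (w (y₁ t) - w (y₂ t)) ^ 2 ≤
      M ^ 2 * (∫ s in Ioc 0 T, (deriv y₁ s - deriv y₂ s) ^ 2) *
        ∫ θ in Ioc 0 1, pulledBackDensity w y₁ y₂ t θ := by
  set B := ∫ s in Ioc 0 T, (deriv y₁ s - deriv y₂ s) ^ 2
  have hB : 0 ≤ B := integral_nonneg fun _ => sq_nonneg _
  have hweight : ∀ θ ∈ Icc (0:ℝ) 1, (y₁ t - y₂ t) ^ 2 ≤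
      M * interpolate y₁ y₂ θ t * B * (M * interpolate (deriv y₁) (deriv y₂) θ t) := by
    intro θ hθ
    obtain ⟨⟨hv, -⟩, ⟨hp, -⟩⟩ := h₁.interpolate_mem h₂ ht hθ
    have hv' : 1 ≤ M * interpolate (deriv y₁) (deriv y₂) θ t := by
      simpa [hM.ne'] using mul_le_mul_of_nonneg_left hv hM.le
    have hp' : t ≤ M * interpolate y₁ y₂ θ t := by
      simpa [hM.ne'] using mul_le_mul_of_nonneg_left hp hM.le
    have hMp : 0 ≤ M * interpolate y₁ y₂ θ t := ht.1.trans hp'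
    calc (y₁ t - y₂ t) ^ 2 ≤ t * B := h₁.sq_sub_le hM h₂ ht
      _ ≤ M * interpolate y₁ y₂ θ t * B := by gcongr
      _ ≤ _ := le_mul_of_one_le_right (by positivity) hv'
  calc (w (y₁ t) - w (y₂ t)) ^ 2
      ≤ ∫ θ in Ioc 0 1, (deriv w (interpolate y₁ y₂ θ t) * (y₁ t - y₂ t)) ^ 2 :=
        sq_sub_le_setIntegral_sq_deriv_comp hw hK _ _
    _ ≤ ∫ θ in Ioc 0 1, M ^ 2 * B * pulledBackDensity w y₁ y₂ t θ := by
        refine integral_mono_of_nonneg (ae_of_all _ fun _ => sq_nonneg _) (hG.const_mul _)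
          ((ae_restrict_mem measurableSet_Ioc).mono fun θ hθ => ?_)
        calc (deriv w (interpolate y₁ y₂ θ t) * (y₁ t - y₂ t)) ^ 2
            = deriv w (interpolate y₁ y₂ θ t) ^ 2 * (y₁ t - y₂ t) ^ 2 := by ring
          _ ≤ deriv w (interpolate y₁ y₂ θ t) ^ 2 *
                (M * interpolate y₁ y₂ θ t * B * (M * interpolate (deriv y₁) (deriv y₂) θ t)) :=
            by gcongr; exact hweight θ (Ioc_subset_Icc_self hθ)
          _ = M ^ 2 * B * pulledBackDensity w y₁ y₂ t θ := by unfold pulledBackDensity; ring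
    _ = M ^ 2 * B * ∫ θ in Ioc 0 1, pulledBackDensity w y₁ y₂ t θ := integral_const_mul _ _

lemma PinchedPath.setIntegral_pulledBackDensity_le (hM : 0 < M) (h₁ : PinchedPath M T y₁)
    (h₂ : PinchedPath M T y₂) (hI : IntegrableOn (fun z => z * deriv w z ^ 2) (Ioi 0)) {θ : ℝ}
    (hθ : θ ∈ Icc 0 1) :
    ∫ t in Ioc 0 T, pulledBackDensity w y₁ y₂ t θ ≤ ∫ z in Ioi 0, z * deriv w z ^ 2 :=
  setIntegral_deriv_mul_comp_le_setIntegral_Ioi (g := fun z => z * deriv w z ^ 2)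
    (h₁.hasDerivAt_interpolate h₂ θ) (by simp [interpolate, h₁.map_zero, h₂.map_zero])
    (fun t ht => (inv_pos.2 hM).trans_le (h₁.interpolate_mem h₂ ht hθ).1.1) hI
    fun z hz => mul_nonneg (le_of_lt hz) (sq_nonneg _)

lemma PinchedPath.setIntegral_sq_comp_sub_le (hM : 0 < M) (h₁ : PinchedPath M T y₁)
    (h₂ : PinchedPath M T y₂) (hw : Differentiable ℝ w) (hK : ∀ z, |deriv w z| ≤ K)
    (hI : IntegrableOn (fun z => z * deriv w z ^ 2) (Ioi 0)) :
    ∫ t in Ioc 0 T, (w (y₁ t) - w (y₂ t)) ^ 2 ≤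
      M ^ 2 * (∫ s in Ioc 0 T, (deriv y₁ s - deriv y₂ s) ^ 2) *
        ∫ z in Ioi 0, z * deriv w z ^ 2 := by
  set B := ∫ s in Ioc 0 T, (deriv y₁ s - deriv y₂ s) ^ 2
  set I := ∫ z in Ioi 0, z * deriv w z ^ 2
  set G := pulledBackDensity w y₁ y₂
  have hG := h₁.integrable_pulledBackDensity hM h₂ hK
  have hB : 0 ≤ B := integral_nonneg fun _ => sq_nonneg _
  calc ∫ t in Ioc 0 T, (w (y₁ t) - w (y₂ t)) ^ 2
      ≤ ∫ t in Ioc 0 T, M ^ 2 * B * ∫ θ in Ioc 0 1, G t θ := by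
        refine integral_mono_of_nonneg (ae_of_all _ fun _ => sq_nonneg _)
          (hG.integral_prod_left.const_mul _) ?_
        filter_upwards [ae_restrict_mem measurableSet_Ioc, hG.prod_right_ae] with t ht htG
        exact h₁.sq_comp_sub_le hM h₂ hw hK (Ioc_subset_Icc_self ht) htG
    _ = M ^ 2 * B * ∫ θ in Ioc 0 1, ∫ t in Ioc 0 T, G t θ := by
        rw [integral_const_mul, integral_integral_swap hG]
    _ ≤ M ^ 2 * B * ∫ θ in Ioc (0:ℝ) 1, I := by
        refine mul_le_mul_of_nonneg_left (setIntegral_mono_on hG.integral_prod_right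
          (integrableOn_const measure_Ioc_lt_top.ne) measurableSet_Ioc fun θ hθ => ?_)
          (by positivity)
        exact h₁.setIntegral_pulledBackDensity_le hM h₂ hI (Ioc_subset_Icc_self hθ)
    _ = M ^ 2 * B * I := by simp

end

/-- Taylor-type L² comparison estimate, with constant depending only on M. -/
theorem taylor_L2_comparison (M : ℝ) (hM : 1 ≤ M) :
    ∃ C > (0:ℝ), ∀ (T : ℝ), 0 < T → ∀ (y₁ y₂ : ℝ → ℝ),
      Differentiable ℝ y₁ → Differentiable ℝ y₂ →
      y₁ 0 = 0 → y₂ 0 = 0 →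
      (∀ t ∈ Set.Icc (0:ℝ) T, M⁻¹ ≤ deriv y₁ t ∧ deriv y₁ t ≤ M) →
      (∀ t ∈ Set.Icc (0:ℝ) T, M⁻¹ ≤ deriv y₂ t ∧ deriv y₂ t ≤ M) →
      ∀ (w : ℝ → ℝ) (K : ℝ), Differentiable ℝ w →
      (∀ z, |deriv w z| ≤ K) →
      IntegrableOn (fun z => z * (deriv w z) ^ 2) (Set.Ioi 0) →
      Real.sqrt (∫ t in Set.Ioc (0:ℝ) T, (w (y₁ t) - w (y₂ t)) ^ 2)
        ≤ C * Real.sqrt (∫ t in Set.Ioc (0:ℝ) T, (deriv y₁ t - deriv y₂ t) ^ 2)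
            * Real.sqrt (∫ z in Set.Ioi (0:ℝ), z * (deriv w z) ^ 2) := by
  have hM₀ : 0 < M := one_pos.trans_le hM
  refine ⟨M, hM₀, fun T _ y₁ y₂ hd₁ hd₂ h₁0 h₂0 hb₁ hb₂ w K hw hK hI => ?_⟩
  have hmain := PinchedPath.setIntegral_sq_comp_sub_le hM₀ ⟨hd₁, h₁0, hb₁⟩ ⟨hd₂, h₂0, hb₂⟩
    hw hK hI
  calc √(∫ t in Ioc 0 T, (w (y₁ t) - w (y₂ t)) ^ 2)
      ≤ √(M ^ 2 * (∫ t in Ioc 0 T, (deriv y₁ t - deriv y₂ t) ^ 2) *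
          ∫ z in Ioi 0, z * deriv w z ^ 2) := Real.sqrt_le_sqrt hmain
    _ = M * √(∫ t in Ioc 0 T, (deriv y₁ t - deriv y₂ t) ^ 2) *
          √(∫ z in Ioi 0, z * deriv w z ^ 2) := by
        rw [Real.sqrt_mul (by positivity), Real.sqrt_mul (sq_nonneg M), Real.sqrt_sq hM₀.le]
end
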